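/- arXiv:2212.09539 — 3 statements merged into one kernel-verified Lean document; each statement's English description precedes it below -/
import Mathlib

section
/- Let G be a finitely generated group acting geometrically on proper geodesic metric spaces Y and Y', and suppose (G,Y,X) and (G,Y',X) are Morse-injective hyperbolic projections for the same cobounded action of G on X. Then for any coarsely G-equivariant quasi-isometry Ψ: Y → Y', the induced bijection ∂Ψ: ∂₁Y → ∂₁Y' is a homeomorphism with respect to the pullback topologies T(G,Y,X) and T(G,Y',X). Consequently the topology T(G,Y,X) on the Morse boundary of the group G is independent of the choice of geometric action G ↷ Y. -/
noncomputable section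

open Filter Metric Set Topology

/-! ## Gromov products, hyperbolicity, and the visual boundary -/

/-- The Gromov product of `x` and `y` with respect to `o`. -/
def gromovProduct {X : Type*} [MetricSpace X] (o x y : X) : ℝ :=
  (dist o x + dist o y - dist x y) / 2

/-- A metric space is `δ`-hyperbolic if the Gromov product four-point condition holds. -/
def IsDeltaHyperbolic (X : Type*) [MetricSpace X] (δ : ℝ) : Prop :=
  ∀ o x y z : X, min (gromovProduct o x z) (gromovProduct o z y) - δ ≤ gromovProduct o x y

/-- A metric space is Gromov hyperbolic if it is `δ`-hyperbolic for some `δ ≥ 0`. -/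
def GromovHyperbolic (X : Type*) [MetricSpace X] : Prop :=
  ∃ δ : ℝ, 0 ≤ δ ∧ IsDeltaHyperbolic X δ

/-- A sequence converges to infinity if the Gromov products `(x_i | x_j)_o` tend to `∞`
(this is independent of the basepoint, so we quantify over all basepoints). -/
def ConvergesToInfinity {X : Type*} [MetricSpace X] (s : ℕ → X) : Prop :=
  ∀ o : X, Tendsto (fun p : ℕ × ℕ => gromovProduct o (s p.1) (s p.2)) atTop atTop

/-- Two sequences converging to infinity are equivalent if `(x_i | y_i)_o → ∞`. -/
def AsympEquiv {X : Type*} [MetricSpace X] (s t : ℕ → X) : Prop :=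
  ∀ o : X, Tendsto (fun i => gromovProduct o (s i) (t i)) atTop atTop

/-- Sequences converging to infinity. -/
abbrev BoundarySeq (X : Type*) [MetricSpace X] : Type _ :=
  { s : ℕ → X // ConvergesToInfinity s }

/-- The visual boundary (boundary at infinity) of a metric space:
equivalence classes of sequences converging to infinity. -/
def GromovBoundary (X : Type*) [MetricSpace X] : Type _ :=
  Quot (fun s t : BoundarySeq X => AsympEquiv s.1 t.1)

/-- The boundary point represented by a sequence converging to infinity. -/
def boundaryPt {X : Type*} [MetricSpace X] (s : BoundarySeq X) : GromovBoundary X :=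
  Quot.mk (fun s t : BoundarySeq X => AsympEquiv s.1 t.1) s

/-- The Gromov product of two boundary points with respect to `o`:
the infimum over representatives of the liminf of the Gromov products. -/
noncomputable def boundaryGromovProduct {X : Type*} [MetricSpace X] (o : X)
    (ξ η : GromovBoundary X) : ℝ :=
  sInf { r : ℝ | ∃ s t : BoundarySeq X, boundaryPt s = ξ ∧ boundaryPt t = η ∧
    r = liminf (fun i => gromovProduct o (s.1 i) (t.1 i)) atTop }

/-- The visual topology on the boundary at infinity, generated by the neighbourhood
bases `U_{o,R}(ξ) = {η | (ξ|η)_o > R}`. -/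
def visualTopology (X : Type*) [MetricSpace X] : TopologicalSpace (GromovBoundary X) :=
  TopologicalSpace.generateFrom
    { U : Set (GromovBoundary X) | ∃ (o : X) (ξ : GromovBoundary X) (R : ℝ),
        U = { η | R < boundaryGromovProduct o ξ η } }

/-- A path `γ : [a,∞) → X` defines the boundary point `ξ` if every monotone unbounded
sequence of parameters yields a sequence converging to infinity representing `ξ`. -/
def DefinesBoundaryPoint {X : Type*} [MetricSpace X] (γ : ℝ → X) (a : ℝ)
    (ξ : GromovBoundary X) : Prop :=
  ∀ t : ℕ → ℝ, (∀ i, a ≤ t i) → Monotone t → Tendsto t atTop atTop →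
    ∃ h : ConvergesToInfinity (fun i => γ (t i)), boundaryPt ⟨fun i => γ (t i), h⟩ = ξ

/-! ## Quasi-rulers, quasi-geodesics, coarse maps -/

/-- An unparametrised `D`-quasi-ruler on a (closed) interval `I ⊆ ℝ`. -/
structure IsQuasiRuler {X : Type*} [MetricSpace X] (D : ℝ) (I : Set ℝ) (γ : ℝ → X) : Prop where
  ruled : ∀ t ∈ I, ∀ s ∈ I, ∀ r ∈ I, t < s → s < r →
    dist (γ t) (γ s) + dist (γ s) (γ r) ≤ dist (γ t) (γ r) + D
  noJump : ∀ t₀ ∈ I, ∃ c : ℝ, c < D ∧ ∃ ε : ℝ, 0 < ε ∧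
    ∀ t ∈ I, |t - t₀| < ε → dist (γ t) (γ t₀) ≤ c

/-- A metric space admits a `D`-quasi-ruling if any two points are connected by an
unparametrised `D`-quasi-ruler. -/
def AdmitsQuasiRuling (X : Type*) [MetricSpace X] (D : ℝ) : Prop :=
  ∀ x y : X, ∃ (a b : ℝ) (γ : ℝ → X), a ≤ b ∧ γ a = x ∧ γ b = y ∧
    IsQuasiRuler D (Icc a b) γ

/-- `(K,C)`-coarsely Lipschitz maps. -/
def CoarselyLipschitzWith {Y X : Type*} [MetricSpace Y] [MetricSpace X]
    (K C : ℝ) (f : Y → X) : Prop :=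
  ∀ x y : Y, dist (f x) (f y) ≤ K * dist x y + C

def CoarselyLipschitz {Y X : Type*} [MetricSpace Y] [MetricSpace X] (f : Y → X) : Prop :=
  ∃ K C : ℝ, 1 ≤ K ∧ 0 ≤ C ∧ CoarselyLipschitzWith K C f

/-- `(K,C)`-quasi-isometric embeddings. -/
def IsQuasiIsometricEmbeddingWith {Y X : Type*} [MetricSpace Y] [MetricSpace X]
    (K C : ℝ) (f : Y → X) : Prop :=
  ∀ x y : Y, dist x y / K - C ≤ dist (f x) (f y) ∧ dist (f x) (f y) ≤ K * dist x y + C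

/-- `(K,C)`-quasi-isometries. -/
def IsQuasiIsometryWith {Y X : Type*} [MetricSpace Y] [MetricSpace X]
    (K C : ℝ) (f : Y → X) : Prop :=
  IsQuasiIsometricEmbeddingWith K C f ∧ ∀ x : X, ∃ y : Y, dist (f y) x ≤ C

def IsQuasiIsometry {Y X : Type*} [MetricSpace Y] [MetricSpace X] (f : Y → X) : Prop :=
  ∃ K C : ℝ, 1 ≤ K ∧ 0 ≤ C ∧ IsQuasiIsometryWith K C f

/-- `(K,C)`-quasi-geodesics parametrised over a subinterval `I ⊆ ℝ`. -/
def IsQuasiGeodesicOn {X : Type*} [MetricSpace X] (K C : ℝ) (I : Set ℝ) (γ : ℝ → X) : Prop :=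
  ∀ s ∈ I, ∀ t ∈ I, |s - t| / K - C ≤ dist (γ s) (γ t) ∧ dist (γ s) (γ t) ≤ K * |s - t| + C

/-- An unparametrised quasi-geodesic: a path admitting an orientation-preserving
reparametrisation which is a quasi-geodesic. -/
def IsUnparamQuasiGeodesicOn {X : Type*} [MetricSpace X] (I : Set ℝ) (γ : ℝ → X) : Prop :=
  ∃ (φ : ℝ → ℝ) (K C : ℝ), 1 ≤ K ∧ 0 ≤ C ∧ StrictMonoOn φ I ∧ BijOn φ I I ∧
    IsQuasiGeodesicOn K C I (fun t => γ (φ t))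

/-- A geodesic metric space: any two points are joined by an isometrically embedded segment. -/
def GeodesicSpace (Y : Type*) [MetricSpace Y] : Prop :=
  ∀ x y : Y, ∃ γ : ℝ → Y, γ 0 = x ∧ γ (dist x y) = y ∧
    ∀ s ∈ Icc (0 : ℝ) (dist x y), ∀ t ∈ Icc (0 : ℝ) (dist x y), dist (γ s) (γ t) = |s - t|

/-! ## Group actions -/

/-- The action of `G` is by isometries. -/
def IsometricAction (G X : Type*) [Group G] [MetricSpace X] [MulAction G X] : Prop :=
  ∀ g : G, Isometry (fun x : X => g • x)

/-- A cobounded action: translates of some bounded set cover the space. -/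
def CoboundedAction (G X : Type*) [Group G] [MetricSpace X] [MulAction G X] : Prop :=
  ∃ B : Set X, Bornology.IsBounded B ∧ ∀ x : X, ∃ g : G, g • x ∈ B

/-- A cocompact action: translates of some compact set cover the space. -/
def CocompactAction (G Y : Type*) [Group G] [MetricSpace Y] [MulAction G Y] : Prop :=
  ∃ K : Set Y, IsCompact K ∧ ∀ y : Y, ∃ g : G, g • y ∈ K

/-- A geometric action: isometric, properly discontinuous and cocompact. -/
def GeometricAction (G Y : Type*) [Group G] [MetricSpace Y] [MulAction G Y] : Prop :=
  IsometricAction G Y ∧ ProperlyDiscontinuousSMul G Y ∧ CocompactAction G Y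

/-- Coarse `G`-equivariance of a map between two `G`-spaces. -/
def CoarselyEquivariant (G : Type*) {Y X : Type*} [Group G] [MetricSpace Y] [MetricSpace X]
    [MulAction G Y] [MulAction G X] (f : Y → X) : Prop :=
  ∃ C : ℝ, 0 ≤ C ∧ ∀ (g : G) (y : Y), dist (f (g • y)) (g • f y) ≤ C

/-- A hyperbolic projection `(G, Y, X)`: a finitely generated group `G` acting geometrically
on a geodesic metric space `Y` and coboundedly by isometries on a Gromov hyperbolic space `X`
admitting a `D`-quasi-ruling. -/
structure HyperbolicProjection (G Y X : Type*) [Group G] [MetricSpace Y] [MetricSpace X]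
    [MulAction G Y] [MulAction G X] : Prop where
  fg : Group.FG G
  geodesicY : GeodesicSpace Y
  geometricY : GeometricAction G Y
  isometricX : IsometricAction G X
  coboundedX : CoboundedAction G X
  hyperbolicX : GromovHyperbolic X
  ruledX : ∃ D : ℝ, 0 ≤ D ∧ AdmitsQuasiRuling X D

/-- An induced projection map of a hyperbolic projection: any coarsely `G`-equivariant,
coarsely Lipschitz map `Y → X`. -/
def InducedProjection (G : Type*) {Y X : Type*} [Group G] [MetricSpace Y] [MetricSpace X]
    [MulAction G Y] [MulAction G X] (p : Y → X) : Prop :=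
  CoarselyEquivariant G p ∧ CoarselyLipschitz p
/-! ## Morse and sublinearly Morse boundaries -/

/-- Finite Hausdorff distance between two subsets. -/
def FiniteHausdorffDist {Y : Type*} [MetricSpace Y] (A B : Set Y) : Prop :=
  EMetric.hausdorffEdist A B < ⊤

/-- A quasi-geodesic ray, parametrised over `[0, ∞)`. -/
def IsQuasiGeodesicRay {Y : Type*} [MetricSpace Y] (γ : ℝ → Y) : Prop :=
  ∃ K C : ℝ, 1 ≤ K ∧ 0 ≤ C ∧ IsQuasiGeodesicOn K C (Ici 0) γ

/-- A geodesic ray, parametrised over `[0, ∞)`. -/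
def IsGeodesicRay {Y : Type*} [MetricSpace Y] (γ : ℝ → Y) : Prop :=
  ∀ s ∈ Ici (0 : ℝ), ∀ t ∈ Ici (0 : ℝ), dist (γ s) (γ t) = |s - t|

/-- A Morse subset: there is a gauge `μ` such that every `(K,C)`-quasi-geodesic segment with
endpoints on `Z` stays in the `μ(K,C)`-neighbourhood of `Z`. -/
def IsMorseSet {Y : Type*} [MetricSpace Y] (Z : Set Y) : Prop :=
  ∃ μ : ℝ → ℝ → ℝ, ∀ K C : ℝ, 1 ≤ K → 0 ≤ C → ∀ (a b : ℝ) (β : ℝ → Y), a ≤ b →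
    IsQuasiGeodesicOn K C (Icc a b) β → β a ∈ Z → β b ∈ Z →
    ∀ t ∈ Icc a b, infDist (β t) Z ≤ μ K C

/-- Morse quasi-geodesic rays. -/
abbrev MorseRay (Y : Type*) [MetricSpace Y] : Type _ :=
  { γ : ℝ → Y // IsQuasiGeodesicRay γ ∧ IsMorseSet (γ '' Ici 0) }

/-- The Morse boundary `∂₁ Y`: Morse quasi-geodesic rays modulo finite Hausdorff distance. -/
def MorseBoundary (Y : Type*) [MetricSpace Y] : Type _ :=
  Quot (fun γ γ' : MorseRay Y => FiniteHausdorffDist (γ.1 '' Ici 0) (γ'.1 '' Ici 0))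

def morsePt {Y : Type*} [MetricSpace Y] (γ : MorseRay Y) : MorseBoundary Y :=
  Quot.mk (fun γ γ' : MorseRay Y => FiniteHausdorffDist (γ.1 '' Ici 0) (γ'.1 '' Ici 0)) γ

/-- Morse-injectivity of a projection map: every unbounded Morse geodesic (ray or bi-infinite)
in `Y` projects to an unbounded unparametrised quasi-geodesic in `X`. -/
def MorseInjective {Y X : Type*} [MetricSpace Y] [MetricSpace X] (p : Y → X) : Prop :=
  ∀ (I : Set ℝ) (γ : ℝ → Y), (I = Ici (0 : ℝ) ∨ I = univ) →
    (∀ s ∈ I, ∀ t ∈ I, dist (γ s) (γ t) = |s - t|) →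
    IsMorseSet (γ '' I) → ¬ Bornology.IsBounded (γ '' I) →
    IsUnparamQuasiGeodesicOn I (fun t => p (γ t)) ∧
      ¬ Bornology.IsBounded ((fun t => p (γ t)) '' I)

/-- `f` is the boundary map `∂p` induced by the projection `p`: the class of every Morse
quasi-geodesic ray `γ` is sent to the boundary point defined by `p ∘ γ`. -/
def IsInducedBoundaryMap {Y X : Type*} [MetricSpace Y] [MetricSpace X] (p : Y → X)
    (f : MorseBoundary Y → GromovBoundary X) : Prop :=
  ∀ γ : MorseRay Y, DefinesBoundaryPoint (fun t => p (γ.1 t)) 0 (f (morsePt γ))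

/-- `f` is the boundary map `∂Ψ` induced by a quasi-isometry `Ψ` on Morse boundaries:
the class of `γ` is sent to the class of `Ψ ∘ γ`. -/
def IsInducedMorseBoundaryMap {Y Y' : Type*} [MetricSpace Y] [MetricSpace Y'] (Ψ : Y → Y')
    (f : MorseBoundary Y → MorseBoundary Y') : Prop :=
  ∀ γ : MorseRay Y,
    ∃ h : IsQuasiGeodesicRay (fun t => Ψ (γ.1 t)) ∧
        IsMorseSet ((fun t => Ψ (γ.1 t)) '' Ici 0),
      f (morsePt γ) = morsePt (⟨fun t => Ψ (γ.1 t), h⟩ : MorseRay Y')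

/-- `f` is the boundary map `∂Φ` induced by a map `Φ` between hyperbolic spaces:
the class of a sequence `(x_i)` is sent to the class of `(Φ x_i)`. -/
def IsInducedGromovBoundaryMap {X X' : Type*} [MetricSpace X] [MetricSpace X'] (Φ : X → X')
    (f : GromovBoundary X → GromovBoundary X') : Prop :=
  ∀ s : BoundarySeq X, ∃ h : ConvergesToInfinity (fun i => Φ (s.1 i)),
    f (boundaryPt s) = boundaryPt (⟨fun i => Φ (s.1 i), h⟩ : BoundarySeq X')

/-! ## Sublinear functions and `κ`-Morse boundaries -/

/-- A sublinear function: monotone increasing, concave, non-negative, with `κ(t)/t → 0`. -/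
def IsSublinear (κ : ℝ → ℝ) : Prop :=
  (∀ t ∈ Ici (0 : ℝ), 0 ≤ κ t) ∧ MonotoneOn κ (Ici 0) ∧ ConcaveOn ℝ (Ici 0) κ ∧
    Tendsto (fun t => κ t / t) atTop (nhds 0)

/-- The `(κ, n)`-neighbourhood of `Z` with respect to the basepoint `o`. -/
def kappaNbhd {Y : Type*} [MetricSpace Y] (o : Y) (κ : ℝ → ℝ) (Z : Set Y) (n : ℝ) : Set Y :=
  { y | infDist y Z ≤ n * κ (dist o y) }

/-- `Z` is `κ`-Morse with a specified Morse gauge `N`. -/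
def IsKappaMorseWith {Y : Type*} [MetricSpace Y] (o : Y) (κ : ℝ → ℝ) (N : ℝ → ℝ → ℝ)
    (Z : Set Y) : Prop :=
  ∀ K C : ℝ, 1 ≤ K → 0 ≤ C → ∀ (a b : ℝ) (β : ℝ → Y), a ≤ b →
    IsQuasiGeodesicOn K C (Icc a b) β → β a ∈ Z → β b ∈ Z →
    ∀ t ∈ Icc a b, β t ∈ kappaNbhd o κ Z (N K C)

/-- `Z` is `κ`-Morse. -/
def IsKappaMorse {Y : Type*} [MetricSpace Y] (o : Y) (κ : ℝ → ℝ) (Z : Set Y) : Prop :=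
  ∃ N : ℝ → ℝ → ℝ, IsKappaMorseWith o κ N Z

/-- Two sets `κ`-fellow travel (are `κ`-close) if each lies in a `κ`-neighbourhood
of the other. -/
def KappaClose {Y : Type*} [MetricSpace Y] (o : Y) (κ : ℝ → ℝ) (A B : Set Y) : Prop :=
  (∃ n : ℝ, 0 < n ∧ A ⊆ kappaNbhd o κ B n) ∧ (∃ n : ℝ, 0 < n ∧ B ⊆ kappaNbhd o κ A n)

/-- `κ`-Morse quasi-geodesic rays. -/
abbrev KappaMorseRay (Y : Type*) [MetricSpace Y] (o : Y) (κ : ℝ → ℝ) : Type _ :=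
  { γ : ℝ → Y // IsQuasiGeodesicRay γ ∧ IsKappaMorse o κ (γ '' Ici 0) }

/-- The `κ`-Morse boundary `∂_κ Y`: `κ`-Morse quasi-geodesic rays modulo `κ`-fellow
travelling. -/
def KappaBoundary (Y : Type*) [MetricSpace Y] (o : Y) (κ : ℝ → ℝ) : Type _ :=
  Quot (fun γ γ' : KappaMorseRay Y o κ => KappaClose o κ (γ.1 '' Ici 0) (γ'.1 '' Ici 0))

def kappaPt {Y : Type*} [MetricSpace Y] {o : Y} {κ : ℝ → ℝ} (γ : KappaMorseRay Y o κ) :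
    KappaBoundary Y o κ :=
  Quot.mk (fun γ γ' : KappaMorseRay Y o κ => KappaClose o κ (γ.1 '' Ici 0) (γ'.1 '' Ici 0)) γ

/-- `κ`-injectivity of a hyperbolic projection with projection map `p`: the projection of every
`κ`-Morse quasi-geodesic ray defines a boundary point, and two `κ`-Morse quasi-geodesic rays
are `κ`-close iff their projections define the same boundary point. -/
def KappaInjective {Y X : Type*} [MetricSpace Y] [MetricSpace X] (o : Y) (κ : ℝ → ℝ)
    (p : Y → X) : Prop :=
  (∀ γ : ℝ → Y, IsQuasiGeodesicRay γ → IsKappaMorse o κ (γ '' Ici 0) →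
    ∃ ξ : GromovBoundary X, DefinesBoundaryPoint (fun t => p (γ t)) 0 ξ) ∧
  (∀ γ γ' : ℝ → Y, IsQuasiGeodesicRay γ → IsKappaMorse o κ (γ '' Ici 0) →
    IsQuasiGeodesicRay γ' → IsKappaMorse o κ (γ' '' Ici 0) →
    (KappaClose o κ (γ '' Ici 0) (γ' '' Ici 0) ↔
      ∃ ξ : GromovBoundary X, DefinesBoundaryPoint (fun t => p (γ t)) 0 ξ ∧
        DefinesBoundaryPoint (fun t => p (γ' t)) 0 ξ))

/-- `f` is the boundary map `∂p` induced by `p` on the `κ`-Morse boundary. -/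
def IsInducedKappaBoundaryMap {Y X : Type*} [MetricSpace Y] [MetricSpace X] (o : Y)
    (κ : ℝ → ℝ) (p : Y → X) (f : KappaBoundary Y o κ → GromovBoundary X) : Prop :=
  ∀ γ : KappaMorseRay Y o κ, DefinesBoundaryPoint (fun t => p (γ.1 t)) 0 (f (kappaPt γ))

/-- `f` is the boundary map `∂Ψ` induced by a quasi-isometry `Ψ` on `κ`-Morse boundaries. -/
def IsInducedKappaQIMap {Y Y' : Type*} [MetricSpace Y] [MetricSpace Y'] (o : Y) (o' : Y')
    (κ : ℝ → ℝ) (Ψ : Y → Y')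
    (f : KappaBoundary Y o κ → KappaBoundary Y' o' κ) : Prop :=
  ∀ γ : KappaMorseRay Y o κ,
    ∃ h : IsQuasiGeodesicRay (fun t => Ψ (γ.1 t)) ∧
        IsKappaMorse o' κ ((fun t => Ψ (γ.1 t)) '' Ici 0),
      f (kappaPt γ) = kappaPt (⟨fun t => Ψ (γ.1 t), h⟩ : KappaMorseRay Y' o' κ)
/-! ## Coarse medians -/

/-- The median of three real numbers. -/
def realMedian (a b c : ℝ) : ℝ := max (min a b) (min (max a b) c)

/-- A coarse median with constant `C`. -/
def IsCoarseMedianWith {Y : Type*} [MetricSpace Y] (C : ℝ) (μ : Y → Y → Y → Y) : Prop :=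
  (∀ a b c : Y, μ a a b = a ∧ μ a b c = μ b a c ∧ μ a b c = μ b c a) ∧
  (∀ a b c x : Y, dist (μ (μ a x b) x c) (μ a x (μ b x c)) ≤ C) ∧
  (∀ a b c x : Y, dist (μ a b c) (μ x b c) ≤ C * dist a x + C)

/-- A coarse median. -/
def IsCoarseMedian {Y : Type*} [MetricSpace Y] (μ : Y → Y → Y → Y) : Prop :=
  ∃ C : ℝ, 0 ≤ C ∧ IsCoarseMedianWith C μ

/-- A coarse median map between coarse median spaces. -/
def IsCoarseMedianMap {Y Y' : Type*} [MetricSpace Y] [MetricSpace Y']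
    (μ : Y → Y → Y → Y) (μ' : Y' → Y' → Y' → Y') (f : Y → Y') : Prop :=
  ∃ D : ℝ, 0 ≤ D ∧ ∀ a b c : Y, dist (f (μ a b c)) (μ' (f a) (f b) (f c)) ≤ D

/-- A `G`-invariant coarse median (invariance up to uniformly bounded distance). -/
def EquivariantMedian (G : Type*) {Y : Type*} [Group G] [MetricSpace Y] [MulAction G Y]
    (μ : Y → Y → Y → Y) : Prop :=
  ∃ C : ℝ, 0 ≤ C ∧ ∀ (g : G) (a b c : Y), dist (g • μ a b c) (μ (g • a) (g • b) (g • c)) ≤ C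

/-- A `D`-median ray: a coarse median map (with constant `D`) from `[0,∞)`
with the standard median of `ℝ`. -/
def IsMedianRayWith {Y : Type*} [MetricSpace Y] (D : ℝ) (μ : Y → Y → Y → Y)
    (γ : ℝ → Y) : Prop :=
  ∀ a ∈ Ici (0 : ℝ), ∀ b ∈ Ici (0 : ℝ), ∀ c ∈ Ici (0 : ℝ),
    dist (γ (realMedian a b c)) (μ (γ a) (γ b) (γ c)) ≤ D

/-- A `μ`-median ray. -/
def IsMedianRay {Y : Type*} [MetricSpace Y] (μ : Y → Y → Y → Y) (γ : ℝ → Y) : Prop :=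
  ∃ D : ℝ, 0 ≤ D ∧ IsMedianRayWith D μ γ

/-- `∂_κ Y` has `μ`-median representatives: every point of the `κ`-Morse boundary is
represented by a `μ`-median quasi-geodesic ray. -/
def HasMedianRepresentatives {Y : Type*} [MetricSpace Y] (o : Y) (κ : ℝ → ℝ)
    (μ : Y → Y → Y → Y) : Prop :=
  ∀ γ : KappaMorseRay Y o κ, ∃ γ' : KappaMorseRay Y o κ, IsMedianRay μ γ'.1 ∧
    KappaClose o κ (γ.1 '' Ici 0) (γ'.1 '' Ici 0)

/-- `(κ, μ)`-injectivity of a hyperbolic projection with projection map `p`. -/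
def KappaMuInjective {Y X : Type*} [MetricSpace Y] [MetricSpace X] (o : Y) (κ : ℝ → ℝ)
    (μ : Y → Y → Y → Y) (p : Y → X) : Prop :=
  (∀ γ : ℝ → Y, IsQuasiGeodesicRay γ → IsKappaMorse o κ (γ '' Ici 0) → IsMedianRay μ γ →
    ∃ ξ : GromovBoundary X, DefinesBoundaryPoint (fun t => p (γ t)) 0 ξ) ∧
  (∀ γ γ' : ℝ → Y, IsQuasiGeodesicRay γ → IsKappaMorse o κ (γ '' Ici 0) → IsMedianRay μ γ →
    IsQuasiGeodesicRay γ' → IsKappaMorse o κ (γ' '' Ici 0) → IsMedianRay μ γ' →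
    (KappaClose o κ (γ '' Ici 0) (γ' '' Ici 0) ↔
      ∃ ξ : GromovBoundary X, DefinesBoundaryPoint (fun t => p (γ t)) 0 ξ ∧
        DefinesBoundaryPoint (fun t => p (γ' t)) 0 ξ))

/-- `f` is the boundary map `∂p` induced by `p` on the `κ`-Morse boundary, defined via
`μ`-median representatives. -/
def IsInducedKappaMuBoundaryMap {Y X : Type*} [MetricSpace Y] [MetricSpace X] (o : Y)
    (κ : ℝ → ℝ) (μ : Y → Y → Y → Y) (p : Y → X)
    (f : KappaBoundary Y o κ → GromovBoundary X) : Prop :=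
  ∀ γ : KappaMorseRay Y o κ, IsMedianRay μ γ.1 →
    DefinesBoundaryPoint (fun t => p (γ.1 t)) 0 (f (kappaPt γ))
/-! ## Trees and Cantor chains -/

/-- A geodesic ray from `root` in the graph `T`. -/
structure TreeRay {V : Type*} (T : SimpleGraph V) (root : V) where
  toFun : ℕ → V
  init : toFun 0 = root
  adj : ∀ n, T.Adj (toFun n) (toFun (n + 1))
  inj : Function.Injective toFun

/-- The visual topology on the space of rays from `root`, generated by the sets
`U_v` of rays passing through a vertex `v`. -/
def treeTopology {V : Type*} (T : SimpleGraph V) (root : V) :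
    TopologicalSpace (TreeRay T root) :=
  TopologicalSpace.generateFrom
    { U : Set (TreeRay T root) | ∃ v : V, U = { r | ∃ n, r.toFun n = v } }

/-- The rays from `root` that lie in the subgraph `S`. -/
def raysIn {V : Type*} {T : SimpleGraph V} (root : V) (S : T.Subgraph) :
    Set (TreeRay T root) :=
  { r | ∀ n, S.Adj (r.toFun n) (r.toFun (n + 1)) }

/-- Every vertex has countably infinite degree. -/
def CountablyBranching {V : Type*} (T : SimpleGraph V) : Prop :=
  ∀ v : V, (T.neighborSet v).Countable ∧ (T.neighborSet v).Infinite

/-- A nested family of locally finite subtrees, all of whose vertices have degree at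
least three, containing the root. -/
def SubtreeFamily {V : Type*} (T : SimpleGraph V) (root : V) (S : ℕ → T.Subgraph) : Prop :=
  (∀ i, root ∈ (S i).verts) ∧
  (∀ i, (S i).Connected) ∧
  (∀ i, ∀ v ∈ (S i).verts, ((S i).neighborSet v).Finite) ∧
  (∀ i, ∀ v ∈ (S i).verts, 3 ≤ ((S i).neighborSet v).ncard) ∧
  (∀ i, S i ≤ S (i + 1))

/-- The family is strongly entwined: each vertex of `S i` has strictly larger degree
in `S (i+1)`. -/
def StronglyEntwined {V : Type*} (T : SimpleGraph V) (S : ℕ → T.Subgraph) : Prop :=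
  ∀ i, ∀ v ∈ (S i).verts, (S i).neighborSet v ⊂ (S (i + 1)).neighborSet v

/-- The family fills `T`: every edge of `T` lies in some `S i`. -/
def FillsTree {V : Type*} (T : SimpleGraph V) (S : ℕ → T.Subgraph) : Prop :=
  ∀ u v : V, T.Adj u v → ∃ i, (S i).Adj u v

/-- The subtree spanned (convex hull from the root) by a family of rays from the root. -/
def raysHull {V : Type*} {T : SimpleGraph V} (root : V) (R : Set (TreeRay T root)) :
    T.Subgraph where
  verts := { v | ∃ r ∈ R, ∃ n, r.toFun n = v }
  Adj u v := ∃ r ∈ R, ∃ n, (r.toFun n = u ∧ r.toFun (n + 1) = v) ∨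
    (r.toFun n = v ∧ r.toFun (n + 1) = u)
  adj_sub := by
    rintro u v ⟨r, -, n, h | h⟩
    · rw [← h.1, ← h.2]; exact r.adj n
    · rw [← h.1, ← h.2]; exact (r.adj n).symm
  edge_vert := by
    rintro u v ⟨r, hr, n, h | h⟩
    · exact ⟨r, hr, n, h.1⟩
    · exact ⟨r, hr, n + 1, h.2⟩
  symm := by
    constructor
    rintro u v ⟨r, hr, n, h⟩
    exact ⟨r, hr, n, h.symm⟩

/-- A Cantor chain: a topological space homeomorphic to the union `⋃ i ∂∞ T_i ⊆ ∂∞ T∞`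
for a filling family of strongly entwined subtrees of the tree `T∞` of countably
infinite valence. -/
def IsCantorChain (Z : Type*) (τ : TopologicalSpace Z) : Prop :=
  ∃ (V : Type) (T : SimpleGraph V) (root : V) (S : ℕ → T.Subgraph),
    T.IsTree ∧ CountablyBranching T ∧ SubtreeFamily T root S ∧
    StronglyEntwined T S ∧ FillsTree T S ∧
    ∃ e : Z → TreeRay T root, Function.Injective e ∧
      range e = ⋃ i, raysIn root (S i) ∧
      τ = TopologicalSpace.induced e (treeTopology T root)


/-!
Cocompactness of `G ↷ Y` and coarse equivariance force the two projections `p` and `p' ∘ Ψ`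
of `Y` to `X` to stay at uniformly bounded distance, so they define the same boundary points:
`∂p = ∂p' ∘ ∂Ψ`. Since `∂Ψ` is a bijection (a quasi-inverse of `Ψ` provides preimages), the
topology pulled back along `∂p` is the one pulled back along `∂Ψ` from `T(G,Y',X)`, which makes
`∂Ψ` a homeomorphism.
-/

section CoarseMaps

variable {X Y Z : Type*} [MetricSpace X] [MetricSpace Y] [MetricSpace Z]

theorem IsQuasiIsometricEmbeddingWith.dist_le {K C : ℝ} {Ψ : Y → Z}
    (hΨ : IsQuasiIsometricEmbeddingWith K C Ψ) (hK : 0 < K) (x y : Y) :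
    dist x y ≤ K * (dist (Ψ x) (Ψ y) + C) := by
  rw [← div_le_iff₀' hK]
  linarith [(hΨ x y).1]

theorem IsQuasiIsometricEmbeddingWith.of_dist_comp_le {K C : ℝ} {Ψ : Y → Z} {Φ : Z → Y}
    (hΨ : IsQuasiIsometricEmbeddingWith K C Ψ) (hK : 1 ≤ K) (hC : 0 ≤ C)
    (hΦ : ∀ z, dist (Ψ (Φ z)) z ≤ C) :
    IsQuasiIsometricEmbeddingWith K (3 * K * C) Φ := by
  have hK₀ : 0 < K := zero_lt_one.trans_le hK
  intro x y
  have hxy : dist x y ≤ dist (Ψ (Φ x)) (Ψ (Φ y)) + 2 * C := by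
    linarith [dist_triangle4 x (Ψ (Φ x)) (Ψ (Φ y)) y, dist_comm x (Ψ (Φ x)), hΦ x, hΦ y]
  have hΨΦ : dist (Ψ (Φ x)) (Ψ (Φ y)) ≤ dist x y + 2 * C := by
    linarith [dist_triangle4 (Ψ (Φ x)) x y (Ψ (Φ y)), dist_comm y (Ψ (Φ y)), hΦ x, hΦ y]
  constructor
  · rw [sub_le_iff_le_add, div_le_iff₀' hK₀]
    linarith [(hΨ (Φ x) (Φ y)).2,
      mul_le_mul_of_nonneg_right (one_le_mul_of_one_le_of_one_le hK hK) hC]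
  · nlinarith [hΨ.dist_le hK₀ (Φ x) (Φ y)]

theorem IsQuasiGeodesicOn.comp {K C K' C' : ℝ} {I : Set ℝ} {γ : ℝ → Y} {Ψ : Y → Z}
    (hγ : IsQuasiGeodesicOn K' C' I γ) (hΨ : IsQuasiIsometricEmbeddingWith K C Ψ)
    (hK : 1 ≤ K) (hC' : 0 ≤ C') :
    IsQuasiGeodesicOn (K * K') (K * C' + C) I (fun t => Ψ (γ t)) := by
  have hK₀ : 0 < K := zero_lt_one.trans_le hK
  intro s hs t ht
  obtain ⟨hlow, hup⟩ := hγ s hs t ht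
  obtain ⟨hΨlow, hΨup⟩ := hΨ (γ s) (γ t)
  constructor
  · have hC'K : C' / K ≤ K * C' := by
      rw [div_le_iff₀ hK₀]
      nlinarith [mul_le_mul_of_nonneg_left hK (mul_nonneg hK₀.le hC')]
    have : |s - t| / (K * K') - C' / K ≤ dist (γ s) (γ t) / K := by
      rw [mul_comm, ← div_div, ← sub_div]
      exact div_le_div_of_nonneg_right hlow hK₀.le
    linarith
  · nlinarith [mul_le_mul_of_nonneg_left hup hK₀.le]

theorem IsQuasiGeodesicOn.of_dist_le {K C E : ℝ} {I : Set ℝ} {γ γ' : ℝ → Y}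
    (hγ : IsQuasiGeodesicOn K C I γ) (h : ∀ t ∈ I, dist (γ' t) (γ t) ≤ E) :
    IsQuasiGeodesicOn K (C + 2 * E) I γ' := by
  intro s hs t ht
  obtain ⟨hlow, hup⟩ := hγ s hs t ht
  have hs' := h s hs
  have ht' := h t ht
  constructor
  · linarith [dist_triangle4 (γ s) (γ' s) (γ' t) (γ t), dist_comm (γ s) (γ' s)]
  · linarith [dist_triangle4 (γ' s) (γ s) (γ t) (γ' t), dist_comm (γ t) (γ' t)]

theorem IsQuasiIsometry.coarselyLipschitz {Ψ : Y → Z} (hΨ : IsQuasiIsometry Ψ) :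
    CoarselyLipschitz Ψ :=
  let ⟨K, C, hK, hC, hΨ, _⟩ := hΨ
  ⟨K, C, hK, hC, fun x y => (hΨ x y).2⟩

theorem CoarselyLipschitz.comp {f : Y → Z} {g : X → Y} (hf : CoarselyLipschitz f)
    (hg : CoarselyLipschitz g) : CoarselyLipschitz (fun x => f (g x)) := by
  obtain ⟨K, C, hK, hC, hf⟩ := hf
  obtain ⟨K', C', hK', hC', hg⟩ := hg
  refine ⟨K * K', K * C' + C, one_le_mul_of_one_le_of_one_le hK hK', by positivity,
    fun x y => ?_⟩
  nlinarith [hf (g x) (g y), mul_le_mul_of_nonneg_left (hg x y) (zero_le_one.trans hK)]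

theorem CoarselyLipschitz.isBounded_image {f : Y → Z} (hf : CoarselyLipschitz f) {B : Set Y}
    (hB : Bornology.IsBounded B) : Bornology.IsBounded (f '' B) := by
  obtain ⟨K, C, hK, -, hf⟩ := hf
  obtain ⟨D, hD⟩ := isBounded_iff.1 hB
  refine isBounded_iff.2 ⟨K * D + C, ?_⟩
  rintro _ ⟨x, hx, rfl⟩ _ ⟨y, hy, rfl⟩
  calc dist (f x) (f y) ≤ K * dist x y + C := hf x y
    _ ≤ K * D + C := by gcongr; exact hD hx hy

end CoarseMaps

section Equivariance

variable {G X Y Z : Type*} [Group G] [MetricSpace X] [MetricSpace Y] [MetricSpace Z]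
  [MulAction G X] [MulAction G Y] [MulAction G Z]

theorem CoarselyEquivariant.comp {f : Y → Z} {g : X → Y} (hf : CoarselyEquivariant G f)
    (hf' : CoarselyLipschitz f) (hg : CoarselyEquivariant G g) :
    CoarselyEquivariant G (fun x => f (g x)) := by
  obtain ⟨Cf, hCf, hf⟩ := hf
  obtain ⟨K, C, hK, hC, hf'⟩ := hf'
  obtain ⟨Cg, hCg, hg⟩ := hg
  refine ⟨K * Cg + C + Cf, by positivity, fun h x => ?_⟩
  calc dist (f (g (h • x))) (h • f (g x))
      ≤ dist (f (g (h • x))) (f (h • g x)) + dist (f (h • g x)) (h • f (g x)) :=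
        dist_triangle _ _ _
    _ ≤ (K * dist (g (h • x)) (h • g x) + C) + Cf := add_le_add (hf' _ _) (hf h (g x))
    _ ≤ K * Cg + C + Cf := by
      nlinarith [mul_le_mul_of_nonneg_left (hg h x) (zero_le_one.trans hK)]

theorem InducedProjection.comp {f : Y → Z} {g : X → Y} (hf : InducedProjection G f)
    (hg : CoarselyEquivariant G g) (hg' : CoarselyLipschitz g) :
    InducedProjection G (fun x => f (g x)) :=
  ⟨hf.1.comp hf.2 hg, hf.2.comp hg'⟩

theorem InducedProjection.exists_dist_le {f g : Y → X} (hf : InducedProjection G f)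
    (hY : CocompactAction G Y) (hX : IsometricAction G X) (hg : InducedProjection G g) :
    ∃ M, ∀ y, dist (f y) (g y) ≤ M := by
  obtain ⟨Kc, hKc, hcover⟩ := hY
  obtain ⟨Cf, -, hfe⟩ := hf.1
  obtain ⟨Cg, -, hge⟩ := hg.1
  have hB : Bornology.IsBounded (f '' Kc ∪ g '' Kc) :=
    (hf.2.isBounded_image hKc.isBounded).union (hg.2.isBounded_image hKc.isBounded)
  refine ⟨diam (f '' Kc ∪ g '' Kc) + Cf + Cg, fun y => ?_⟩
  obtain ⟨h, hy⟩ := hcover y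
  have hdiam : dist (f (h • y)) (g (h • y)) ≤ diam (f '' Kc ∪ g '' Kc) :=
    dist_le_diam_of_mem hB (.inl (mem_image_of_mem f hy)) (.inr (mem_image_of_mem g hy))
  calc dist (f y) (g y) = dist (h • f y) (h • g y) := ((hX h).dist_eq _ _).symm
    _ ≤ dist (h • f y) (f (h • y)) + dist (f (h • y)) (g (h • y)) + dist (g (h • y)) (h • g y) :=
      dist_triangle4 _ _ _ _
    _ ≤ Cf + diam (f '' Kc ∪ g '' Kc) + Cg :=
      add_le_add (add_le_add (dist_comm (h • f y) _ ▸ hfe h y) hdiam) (hge h y)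
    _ = _ := by ring

end Equivariance

section GromovBoundary

variable {X : Type*} [MetricSpace X]

theorem ConvergesToInfinity.tendsto_dist {s : ℕ → X} (hs : ConvergesToInfinity s) (o : X) :
    Tendsto (fun i => dist o (s i)) atTop atTop :=
  ((hs o).comp tendsto_atTop_diagonal).congr fun i => by
    simp [gromovProduct]

theorem ConvergesToInfinity.asympEquiv_of_dist_le {s t : ℕ → X} (hs : ConvergesToInfinity s)
    {M : ℝ} (hM : ∀ i, dist (s i) (t i) ≤ M) : AsympEquiv s t := fun o =>
  tendsto_atTop_mono (fun i => by
      unfold gromovProduct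
      linarith [dist_triangle o (s i) (t i), dist_triangle o (t i) (s i), dist_comm (s i) (t i),
        hM i])
    (tendsto_atTop_add_const_right _ (-M) (hs.tendsto_dist o))

theorem DefinesBoundaryPoint.eq_of_dist_le {γ γ' : ℝ → X} {a : ℝ} {ξ ξ' : GromovBoundary X}
    (hγ : DefinesBoundaryPoint γ a ξ) (hγ' : DefinesBoundaryPoint γ' a ξ') {M : ℝ}
    (hM : ∀ t, dist (γ t) (γ' t) ≤ M) : ξ = ξ' := by
  have hmono : Monotone fun i : ℕ => a + i := fun i j hij => by simpa using hij
  have htend : Tendsto (fun i : ℕ => a + i) atTop atTop :=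
    tendsto_atTop_add_const_left _ a tendsto_natCast_atTop_atTop
  obtain ⟨hs, rfl⟩ := hγ _ (fun i => by simp) hmono htend
  obtain ⟨-, rfl⟩ := hγ' _ (fun i => by simp) hmono htend
  exact Quot.sound (hs.asympEquiv_of_dist_le fun i => hM _)

end GromovBoundary

section MorseBoundary

variable {Y Z : Type*} [MetricSpace Y] [MetricSpace Z]

theorem finiteHausdorffDist_iff {A B : Set Y} :
    FiniteHausdorffDist A B ↔
      ∃ r : ℝ, (∀ a ∈ A, ∃ b ∈ B, dist a b ≤ r) ∧ ∀ b ∈ B, ∃ a ∈ A, dist b a ≤ r := by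
  change hausdorffEDist A B < ⊤ ↔ _
  constructor
  · intro h
    have hr : hausdorffEDist A B < ENNReal.ofReal ((hausdorffEDist A B).toReal + 1) :=
      (ENNReal.lt_ofReal_iff_toReal_lt h.ne).2 (lt_add_one _)
    refine ⟨(hausdorffEDist A B).toReal + 1, fun a ha => ?_, fun b hb => ?_⟩
    · obtain ⟨b, hb, hab⟩ := exists_edist_lt_of_hausdorffEDist_lt ha hr
      exact ⟨b, hb, (edist_lt_ofReal.1 hab).le⟩
    · obtain ⟨a, ha, hba⟩ :=
        exists_edist_lt_of_hausdorffEDist_lt hb ((hausdorffEDist_comm (s := B)).trans_lt hr)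
      exact ⟨a, ha, (edist_lt_ofReal.1 hba).le⟩
  · rintro ⟨r, hAB, hBA⟩
    refine lt_of_le_of_lt (hausdorffEDist_le_of_mem_edist (r := ENNReal.ofReal r) ?_ ?_)
      ENNReal.ofReal_lt_top
    · intro a ha
      obtain ⟨b, hb, hab⟩ := hAB a ha
      exact ⟨b, hb, edist_dist a b ▸ ENNReal.ofReal_le_ofReal hab⟩
    · intro b hb
      obtain ⟨a, ha, hba⟩ := hBA b hb
      exact ⟨a, ha, edist_dist b a ▸ ENNReal.ofReal_le_ofReal hba⟩

theorem finiteHausdorffDist_equivalence : Equivalence (FiniteHausdorffDist (Y := Y)) where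
  refl A := by
    change hausdorffEDist A A < ⊤
    simp
  symm {A B} h := by
    change hausdorffEDist B A < ⊤
    exact hausdorffEDist_comm (s := A) ▸ h
  trans {A B C} h₁ h₂ := hausdorffEDist_triangle.trans_lt (ENNReal.add_lt_top.2 ⟨h₁, h₂⟩)

theorem morsePt_surjective : Function.Surjective (morsePt (Y := Y)) :=
  Quot.mk_surjective

theorem morsePt_eq_iff {γ γ' : MorseRay Y} :
    morsePt γ = morsePt γ' ↔ FiniteHausdorffDist (γ.1 '' Ici 0) (γ'.1 '' Ici 0) :=
  ⟨fun h => ((finiteHausdorffDist_equivalence.comap _).eqvGen_iff).1 (Quot.eqvGen_exact h),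
    fun h => Quot.sound h⟩

theorem finiteHausdorffDist_image_of_dist_le {f g : ℝ → Y} {I : Set ℝ} {M : ℝ}
    (h : ∀ t, dist (f t) (g t) ≤ M) : FiniteHausdorffDist (f '' I) (g '' I) :=
  finiteHausdorffDist_iff.2 ⟨M, fun _ ⟨t, ht, hft⟩ => ⟨g t, mem_image_of_mem g ht, hft ▸ h t⟩,
    fun _ ⟨t, ht, hgt⟩ => ⟨f t, mem_image_of_mem f ht, hgt ▸ dist_comm (f t) (g t) ▸ h t⟩⟩

theorem FiniteHausdorffDist.of_image {K C : ℝ} {Ψ : Y → Z}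
    (hΨ : IsQuasiIsometricEmbeddingWith K C Ψ) (hK : 0 < K) {A B : Set Y}
    (h : FiniteHausdorffDist (Ψ '' A) (Ψ '' B)) : FiniteHausdorffDist A B := by
  obtain ⟨r, hAB, hBA⟩ := finiteHausdorffDist_iff.1 h
  refine finiteHausdorffDist_iff.2 ⟨K * (r + C), fun a ha => ?_, fun b hb => ?_⟩
  · obtain ⟨_, ⟨b, hb, rfl⟩, hab⟩ := hAB (Ψ a) (mem_image_of_mem Ψ ha)
    exact ⟨b, hb, (hΨ.dist_le hK a b).trans (by gcongr)⟩
  · obtain ⟨_, ⟨a, ha, rfl⟩, hba⟩ := hBA (Ψ b) (mem_image_of_mem Ψ hb)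
    exact ⟨a, ha, (hΨ.dist_le hK b a).trans (by gcongr)⟩

theorem infDist_image_le_of_dist_comp_le {K C : ℝ} {Ψ : Y → Z} {Φ : Z → Y}
    (hΨ : IsQuasiIsometricEmbeddingWith K C Ψ) (hK : 0 < K) (hΦ : ∀ z, dist (Ψ (Φ z)) z ≤ C)
    {Z' : Set Z} (hZ' : Z'.Nonempty) (y : Y) :
    infDist y (Φ '' Z') ≤ K * (infDist (Ψ y) Z' + 2 * C) := by
  have hbound : ∀ z ∈ Z', infDist y (Φ '' Z') ≤ K * (dist (Ψ y) z + 2 * C) := fun z hz =>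
    calc infDist y (Φ '' Z') ≤ dist y (Φ z) := infDist_le_dist_of_mem (mem_image_of_mem Φ hz)
      _ ≤ K * (dist (Ψ y) (Ψ (Φ z)) + C) := hΨ.dist_le hK y (Φ z)
      _ ≤ K * (dist (Ψ y) z + 2 * C) := by
        refine mul_le_mul_of_nonneg_left ?_ hK.le
        linarith [dist_triangle (Ψ y) z (Ψ (Φ z)), dist_comm z (Ψ (Φ z)), hΦ z]
  have : infDist y (Φ '' Z') / K - 2 * C ≤ infDist (Ψ y) Z' :=
    (le_infDist hZ').2 fun z hz => by
      rw [sub_le_iff_le_add, div_le_iff₀' hK]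
      exact hbound z hz
  rwa [sub_le_iff_le_add, div_le_iff₀' hK] at this

theorem IsMorseSet.image_of_dist_comp_le {K C : ℝ} {Ψ : Y → Z} {Φ : Z → Y}
    (hΨ : IsQuasiIsometricEmbeddingWith K C Ψ) (hK : 1 ≤ K) (hC : 0 ≤ C)
    (hΦ : ∀ z, dist (Ψ (Φ z)) z ≤ C) {Z' : Set Z} (hZ' : Z'.Nonempty) (hM : IsMorseSet Z') :
    IsMorseSet (Φ '' Z') := by
  have hK₀ : 0 < K := zero_lt_one.trans_le hK
  obtain ⟨μ, hμ⟩ := hM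
  refine ⟨fun K₁ C₁ => K * (μ (K * K₁) (K * C₁ + C + 2 * C) + C + 2 * C), ?_⟩
  rintro K₁ C₁ hK₁ hC₁ a b β hab hβ ⟨za, hza, hβa⟩ ⟨zb, hzb, hβb⟩ t ht
  -- `Ψ ∘ β` with its endpoints moved into `Z'`, so that the Morse property of `Z'` applies
  set β' : ℝ → Z := fun r => if r = a then za else if r = b then zb else Ψ (β r)
  have hβ'a : β' a ∈ Z' := by simp [β', hza]
  have hβ'b : β' b ∈ Z' := by by_cases hba : b = a <;> simp [β', hba, hza, hzb]
  have hβ' : ∀ r, dist (β' r) (Ψ (β r)) ≤ C := by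
    intro r
    by_cases hra : r = a
    · simpa [β', hra, ← hβa, dist_comm] using hΦ za
    by_cases hrb : r = b
    · rw [hrb] at hra ⊢
      simpa [β', hra, ← hβb, dist_comm] using hΦ zb
    simpa [β', hra, hrb] using hC
  have hqg : IsQuasiGeodesicOn (K * K₁) (K * C₁ + C + 2 * C) (Icc a b) β' :=
    (hβ.comp hΨ hK hC₁).of_dist_le fun r _ => hβ' r
  have hμt := hμ _ _ (one_le_mul_of_one_le_of_one_le hK hK₁)
    (by nlinarith [mul_nonneg hK₀.le hC₁]) a b β' hab hqg hβ'a hβ'b t ht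
  calc infDist (β t) (Φ '' Z') ≤ K * (infDist (Ψ (β t)) Z' + 2 * C) :=
        infDist_image_le_of_dist_comp_le hΨ hK₀ hΦ hZ' (β t)
    _ ≤ K * (μ (K * K₁) (K * C₁ + C + 2 * C) + C + 2 * C) := by
        gcongr
        linarith [infDist_le_infDist_add_dist (x := Ψ (β t)) (y := β' t) (s := Z'),
          dist_comm (Ψ (β t)) (β' t), hβ' t]

end MorseBoundary

section BoundaryMaps

variable {X Y Y' : Type*} [MetricSpace X] [MetricSpace Y] [MetricSpace Y']

theorem IsInducedMorseBoundaryMap.injective {K C : ℝ} {Ψ : Y → Y'}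
    {dΨ : MorseBoundary Y → MorseBoundary Y'} (hdΨ : IsInducedMorseBoundaryMap Ψ dΨ)
    (hΨ : IsQuasiIsometricEmbeddingWith K C Ψ) (hK : 0 < K) : Function.Injective dΨ := by
  intro ζ₁ ζ₂ h
  obtain ⟨γ₁, rfl⟩ := morsePt_surjective ζ₁
  obtain ⟨γ₂, rfl⟩ := morsePt_surjective ζ₂
  obtain ⟨_, h₁⟩ := hdΨ γ₁
  obtain ⟨_, h₂⟩ := hdΨ γ₂
  rw [h₁, h₂, morsePt_eq_iff] at h
  rw [morsePt_eq_iff]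
  refine FiniteHausdorffDist.of_image hΨ hK ?_
  simpa only [image_image] using h

theorem IsInducedMorseBoundaryMap.surjective {K C : ℝ} {Ψ : Y → Y'}
    {dΨ : MorseBoundary Y → MorseBoundary Y'} (hdΨ : IsInducedMorseBoundaryMap Ψ dΨ)
    (hΨ : IsQuasiIsometryWith K C Ψ) (hK : 1 ≤ K) (hC : 0 ≤ C) : Function.Surjective dΨ := by
  choose Φ hΦ using hΨ.2
  intro ζ'
  obtain ⟨⟨γ', ⟨K', C', hK', hC', hγ'⟩, hγ'M⟩, rfl⟩ := morsePt_surjective ζ'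
  have hΦγ' : IsQuasiGeodesicRay (fun t => Φ (γ' t)) :=
    ⟨K * K', K * C' + 3 * K * C, one_le_mul_of_one_le_of_one_le hK hK', by positivity,
      hγ'.comp (hΨ.1.of_dist_comp_le hK hC hΦ) hK hC'⟩
  have hΦγ'M : IsMorseSet ((fun t => Φ (γ' t)) '' Ici 0) := by
    rw [← image_image]
    exact hγ'M.image_of_dist_comp_le hΨ.1 hK hC hΦ (nonempty_Ici.image γ')
  refine ⟨morsePt ⟨_, hΦγ', hΦγ'M⟩, ?_⟩
  obtain ⟨_, h⟩ := hdΨ ⟨_, hΦγ', hΦγ'M⟩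
  rw [h, morsePt_eq_iff]
  exact finiteHausdorffDist_image_of_dist_le fun t => hΦ (γ' t)

theorem IsInducedMorseBoundaryMap.bijective {Ψ : Y → Y'}
    {dΨ : MorseBoundary Y → MorseBoundary Y'} (hdΨ : IsInducedMorseBoundaryMap Ψ dΨ)
    (hΨ : IsQuasiIsometry Ψ) : Function.Bijective dΨ :=
  let ⟨_, _, hK, hC, hΨ⟩ := hΨ
  ⟨hdΨ.injective hΨ.1 (zero_lt_one.trans_le hK), hdΨ.surjective hΨ hK hC⟩

theorem IsInducedBoundaryMap.eq_comp {p : Y → X} {p' : Y' → X} {Ψ : Y → Y'}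
    {dp : MorseBoundary Y → GromovBoundary X} {dp' : MorseBoundary Y' → GromovBoundary X}
    {dΨ : MorseBoundary Y → MorseBoundary Y'} (hdp : IsInducedBoundaryMap p dp)
    (hdp' : IsInducedBoundaryMap p' dp') (hdΨ : IsInducedMorseBoundaryMap Ψ dΨ) {M : ℝ}
    (hM : ∀ y, dist (p y) (p' (Ψ y)) ≤ M) (ζ : MorseBoundary Y) : dp ζ = dp' (dΨ ζ) := by
  obtain ⟨γ, rfl⟩ := morsePt_surjective ζ
  obtain ⟨_, h⟩ := hdΨ γ
  rw [h]
  exact (hdp γ).eq_of_dist_le (hdp' _) fun t => hM (γ.1 t)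

end BoundaryMaps

theorem continuous_and_isOpenMap_induced_of_comp_eq {α β γ : Type*} {t : TopologicalSpace γ}
    {f : α → γ} {g : β → γ} {h : α → β} (hfgh : ∀ a, f a = g (h a))
    (hh : Function.Surjective h) :
    @Continuous α β (t.induced f) (t.induced g) h ∧
      @IsOpenMap α β (t.induced f) (t.induced g) h := by
  let _ := t.induced f
  let _ := t.induced g
  have hind : IsInducing h := by
    refine ⟨?_⟩
    rw [induced_compose]
    exact congrArg (TopologicalSpace.induced · t) (funext hfgh)
  exact ⟨hind.continuous, hind.isOpenMap (hh.range_eq ▸ isOpen_univ)⟩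

theorem statement1_general {G Y Y' X : Type*} [Group G]
    [MetricSpace Y] [MetricSpace Y'] [MetricSpace X]
    [MulAction G Y] [MulAction G Y'] [MulAction G X]
    (hYX : HyperbolicProjection G Y X)
    (p : Y → X) (hp : InducedProjection G p)
    (p' : Y' → X) (hp' : InducedProjection G p')
    (Ψ : Y → Y') (hΨe : CoarselyEquivariant G Ψ) (hΨq : IsQuasiIsometry Ψ) :
    ∀ (dp : MorseBoundary Y → GromovBoundary X)
      (dp' : MorseBoundary Y' → GromovBoundary X)
      (dΨ : MorseBoundary Y → MorseBoundary Y'),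
      IsInducedBoundaryMap p dp → IsInducedBoundaryMap p' dp' →
      IsInducedMorseBoundaryMap Ψ dΨ →
      Function.Bijective dΨ ∧
      @Continuous _ _ (TopologicalSpace.induced dp (visualTopology X))
        (TopologicalSpace.induced dp' (visualTopology X)) dΨ ∧
      @IsOpenMap _ _ (TopologicalSpace.induced dp (visualTopology X))
        (TopologicalSpace.induced dp' (visualTopology X)) dΨ := by
  intro dp dp' dΨ hdp hdp' hdΨ
  obtain ⟨M, hM⟩ := hp.exists_dist_le hYX.geometricY.2.2 hYX.isometricX
    (hp'.comp hΨe hΨq.coarselyLipschitz)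
  have hbij := hdΨ.bijective hΨq
  exact ⟨hbij, continuous_and_isOpenMap_induced_of_comp_eq (hdp.eq_comp hdp' hdΨ hM) hbij.2⟩

/-- Corollary: the topology `T(G,Y,X)` is independent of the geometric
action `G ↷ Y`. If `(G,Y,X)` and `(G,Y',X)` are Morse-injective hyperbolic projections
for the same cobounded action on `X`, then for any coarsely `G`-equivariant quasi-isometry
`Ψ : Y → Y'`, the induced bijection `∂Ψ : ∂₁Y → ∂₁Y'` is a homeomorphism with respect to
the pullback topologies `T(G,Y,X)` and `T(G,Y',X)`. -/
theorem statement1 {G Y Y' X : Type*} [Group G]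
    [MetricSpace Y] [MetricSpace Y'] [MetricSpace X]
    [MulAction G Y] [MulAction G Y'] [MulAction G X]
    [ProperSpace Y] [ProperSpace Y']
    (hYX : HyperbolicProjection G Y X) (hY'X : HyperbolicProjection G Y' X)
    (p : Y → X) (hp : InducedProjection G p) (hMI : MorseInjective p)
    (p' : Y' → X) (hp' : InducedProjection G p') (hMI' : MorseInjective p')
    (Ψ : Y → Y') (hΨe : CoarselyEquivariant G Ψ) (hΨq : IsQuasiIsometry Ψ) :
    ∀ (dp : MorseBoundary Y → GromovBoundary X)
      (dp' : MorseBoundary Y' → GromovBoundary X)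
      (dΨ : MorseBoundary Y → MorseBoundary Y'),
      IsInducedBoundaryMap p dp → IsInducedBoundaryMap p' dp' →
      IsInducedMorseBoundaryMap Ψ dΨ →
      Function.Bijective dΨ ∧
      @Continuous _ _ (TopologicalSpace.induced dp (visualTopology X))
        (TopologicalSpace.induced dp' (visualTopology X)) dΨ ∧
      @IsOpenMap _ _ (TopologicalSpace.induced dp (visualTopology X))
        (TopologicalSpace.induced dp' (visualTopology X)) dΨ :=
  statement1_general hYX p hp p' hp' Ψ hΨe hΨq
end
end

section
/- Let (G,Y,X) be a hyperbolic projection and H ≤ G a subgroup of finite index. Then the restricted actions of H on Y and X make (H,Y,X) a hyperbolic projection (H acts geometrically on Y and coboundedly by isometries on X), and for every sublinear function κ, (G,Y,X) is κ-injective if and only if (H,Y,X) is κ-injective. -/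
noncomputable section

open Filter Metric Set Topology

/-!
A finite set of coset representatives `s₁, …, sₙ` of `H` in `G` turns a compact (bounded) set
whose `G`-translates cover a space into the compact (bounded) set `⋃ sᵢ⁻¹ • K` whose
`H`-translates cover it, so `(H,Y,X)` is again a hyperbolic projection. Conversely, writing
`g = h sᵢ⁻¹` and moving a point of `Y` into a bounded set by an element of `H`, the defect of
`G`-equivariance of a coarsely Lipschitz, coarsely `H`-equivariant map is bounded by twice
its `H`-defect plus its defect for the finitely many `sᵢ` on a bounded set. Hence `G` and `H`
have the same induced projection maps, and `κ`-injectivity only depends on the map.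
-/

open Pointwise

section FiniteIndex

variable {G α : Type*} [Group G] (H : Subgroup G)

theorem Subgroup.exists_eq_mul_out_inv (g : G) : ∃ (h : H) (q : G ⧸ H), g = h * q.out⁻¹ := by
  obtain ⟨h, hh⟩ := QuotientGroup.mk_out_eq_mul H g⁻¹
  exact ⟨h, _, by rw [hh]; group⟩

theorem Subgroup.exists_smul_mem_iUnion_out_inv_smul [MulAction G α] {A : Set α} {x : α}
    {g : G} (hg : g • x ∈ A) : ∃ h : H, h • x ∈ ⋃ q : G ⧸ H, q.out⁻¹ • A := by
  obtain ⟨h, q, hq⟩ := H.exists_eq_mul_out_inv g⁻¹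
  have hg' : g = q.out * (h : G)⁻¹ := by rw [← inv_inv g, hq]; group
  refine ⟨h⁻¹, Set.mem_iUnion.mpr ⟨q, Set.mem_smul_set_iff_inv_smul_mem.mpr ?_⟩⟩
  rwa [inv_inv, Subgroup.smul_def, smul_smul, Subgroup.coe_inv, ← hg']

end FiniteIndex

section Restriction

variable {G Y X : Type*} [Group G] [MetricSpace Y] [MetricSpace X] [MulAction G Y]
  [MulAction G X] (H : Subgroup G)

theorem IsometricAction.subgroup (hG : IsometricAction G X) : IsometricAction H X :=
  fun h => hG h

theorem CocompactAction.coboundedAction (hG : CocompactAction G Y) : CoboundedAction G Y :=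
  let ⟨K, hK, hcover⟩ := hG
  ⟨K, hK.isBounded, hcover⟩

theorem CocompactAction.subgroup [H.FiniteIndex] (hiso : IsometricAction G Y)
    (hG : CocompactAction G Y) : CocompactAction H Y := by
  obtain ⟨K, hK, hcover⟩ := hG
  refine ⟨⋃ q : G ⧸ H, q.out⁻¹ • K, isCompact_iUnion fun q => ?_, fun y => ?_⟩
  · simpa only [← Set.image_smul] using hK.image (hiso _).continuous
  · obtain ⟨g, hg⟩ := hcover y
    exact H.exists_smul_mem_iUnion_out_inv_smul hg

theorem CoboundedAction.subgroup [H.FiniteIndex] (hiso : IsometricAction G X)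
    (hG : CoboundedAction G X) : CoboundedAction H X := by
  obtain ⟨B, hB, hcover⟩ := hG
  refine ⟨⋃ q : G ⧸ H, q.out⁻¹ • B, Bornology.isBounded_iUnion.mpr fun q => ?_, fun x => ?_⟩
  · simpa only [← Set.image_smul] using (hiso _).lipschitz.isBounded_image hB
  · obtain ⟨g, hg⟩ := hcover x
    exact H.exists_smul_mem_iUnion_out_inv_smul hg

theorem GeometricAction.subgroup [H.FiniteIndex] (hG : GeometricAction G Y) :
    GeometricAction H Y :=
  let ⟨hiso, _, hcc⟩ := hG
  ⟨hiso.subgroup H, inferInstance, hcc.subgroup H hiso⟩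

theorem HyperbolicProjection.subgroup [H.FiniteIndex] (hYX : HyperbolicProjection G Y X) :
    HyperbolicProjection H Y X :=
  have := hYX.fg
  { fg := inferInstance
    geodesicY := hYX.geodesicY
    geometricY := hYX.geometricY.subgroup H
    isometricX := hYX.isometricX.subgroup H
    coboundedX := hYX.coboundedX.subgroup H hYX.isometricX
    hyperbolicX := hYX.hyperbolicX
    ruledX := hYX.ruledX }

theorem CoarselyEquivariant.subgroup {p : Y → X} (hp : CoarselyEquivariant G p) :
    CoarselyEquivariant H p :=
  let ⟨C, hC, hdefect⟩ := hp
  ⟨C, hC, fun h => hdefect h⟩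

end Restriction

section CoarseMaps

variable {Y X : Type*} [MetricSpace Y] [MetricSpace X]

theorem CoarselyLipschitzWith.dist_le_dist_add {K K' C C' : ℝ} {f f' : Y → X}
    (hf : CoarselyLipschitzWith K C f) (hf' : CoarselyLipschitzWith K' C' f') (y z : Y) :
    dist (f y) (f' y) ≤ dist (f z) (f' z) + (K + K') * dist y z + (C + C') := by
  calc dist (f y) (f' y) ≤ dist (f y) (f z) + dist (f z) (f' z) + dist (f' z) (f' y) :=
        dist_triangle4 _ _ _ _
    _ ≤ (K * dist y z + C) + dist (f z) (f' z) + (K' * dist y z + C') := by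
        gcongr
        · exact hf y z
        · rw [dist_comm y z]; exact hf' z y
    _ = _ := by ring

theorem CoarselyLipschitzWith.exists_dist_le_of_isBounded {K K' C C' : ℝ} {f f' : Y → X}
    (hK : 0 ≤ K) (hK' : 0 ≤ K') (hf : CoarselyLipschitzWith K C f)
    (hf' : CoarselyLipschitzWith K' C' f') {B : Set Y} (hB : Bornology.IsBounded B) :
    ∃ M, ∀ y ∈ B, dist (f y) (f' y) ≤ M := by
  rcases B.eq_empty_or_nonempty with rfl | ⟨z, hz⟩
  · exact ⟨0, by simp⟩
  refine ⟨dist (f z) (f' z) + (K + K') * Metric.diam B + (C + C'), fun y hy => ?_⟩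
  calc dist (f y) (f' y) ≤ dist (f z) (f' z) + (K + K') * dist y z + (C + C') :=
        hf.dist_le_dist_add hf' y z
    _ ≤ _ := by gcongr; exact Metric.dist_le_diam_of_mem hB hy hz

theorem IsometricAction.coarselyLipschitzWith_smul_comp {G : Type*} [Group G] [MulAction G Y]
    {K C : ℝ} {p : Y → X}
    (hiso : IsometricAction G Y) (hp : CoarselyLipschitzWith K C p) (g : G) :
    CoarselyLipschitzWith K C fun y => p (g • y) := fun y z => by
  simpa only [(hiso g).dist_eq] using hp (g • y) (g • z)

theorem IsometricAction.coarselyLipschitzWith_comp_smul {G : Type*} [Group G] [MulAction G X]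
    {K C : ℝ} {p : Y → X}
    (hiso : IsometricAction G X) (hp : CoarselyLipschitzWith K C p) (g : G) :
    CoarselyLipschitzWith K C fun y => g • p y := fun y z => by
  simpa only [(hiso g).dist_eq] using hp y z

end CoarseMaps

section Upgrade

variable {G Y X : Type*} [Group G] [MetricSpace Y] [MetricSpace X] [MulAction G Y]
  [MulAction G X] {H : Subgroup G}

theorem CoarselyEquivariant.of_subgroup [H.FiniteIndex] (hisoY : IsometricAction G Y)
    (hisoX : IsometricAction G X) (hcb : CoboundedAction H Y) {p : Y → X}
    (hp : CoarselyEquivariant H p) (hlip : CoarselyLipschitz p) : CoarselyEquivariant G p := by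
  obtain ⟨C₀, -, hdefect⟩ := hp
  obtain ⟨K, C, hK, -, hKC⟩ := hlip
  obtain ⟨B, hB, hcover⟩ := hcb
  have hrep : ∀ q : G ⧸ H, ∃ M, ∀ w ∈ B, dist (p (q.out⁻¹ • w)) (q.out⁻¹ • p w) ≤ M :=
    fun q => (hisoY.coarselyLipschitzWith_smul_comp hKC _).exists_dist_le_of_isBounded
      (by linarith) (by linarith) (hisoX.coarselyLipschitzWith_comp_smul hKC _) hB
  choose M hM using hrep
  obtain ⟨M', hM'⟩ := (Set.finite_range M).bddAbove
  refine ⟨max (2 * C₀ + M') 0, le_max_right _ _, fun g y => le_max_of_le_left ?_⟩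
  obtain ⟨h₁, hw⟩ := hcover y
  obtain ⟨h₂, q, hg⟩ := H.exists_eq_mul_out_inv (g * h₁⁻¹)
  set w := h₁ • y
  have hy : y = h₁⁻¹ • w := (inv_smul_smul h₁ y).symm
  have hgy : g • y = h₂ • q.out⁻¹ • w := by
    rw [hy]; simp only [Subgroup.smul_def, smul_smul, hg]
  have hgpy : g • h₁⁻¹ • p w = h₂ • q.out⁻¹ • p w := by
    simp only [Subgroup.smul_def, smul_smul, hg]
  calc dist (p (g • y)) (g • p y)
      ≤ dist (p (h₂ • q.out⁻¹ • w)) (h₂ • p (q.out⁻¹ • w))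
        + dist (h₂ • p (q.out⁻¹ • w)) (h₂ • q.out⁻¹ • p w)
        + dist (g • h₁⁻¹ • p w) (g • p y) := by
        rw [hgy, hgpy]; exact dist_triangle4 _ _ _ _
    _ ≤ C₀ + M' + C₀ := by
        gcongr
        · exact hdefect h₂ _
        · rw [(hisoX.subgroup H h₂).dist_eq]
          exact (hM q w hw).trans (hM' (Set.mem_range_self q))
        · rw [(hisoX g).dist_eq, dist_comm, hy]; exact hdefect h₁⁻¹ w
    _ = 2 * C₀ + M' := by ring

theorem inducedProjection_subgroup_iff [H.FiniteIndex] (hYX : HyperbolicProjection G Y X)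
    {p : Y → X} : InducedProjection H p ↔ InducedProjection G p :=
  have ⟨hisoY, _, hcc⟩ := hYX.geometricY
  ⟨fun ⟨heq, hlip⟩ => ⟨heq.of_subgroup hisoY hYX.isometricX
      (hcc.coboundedAction.subgroup H hisoY) hlip, hlip⟩,
    fun ⟨heq, hlip⟩ => ⟨heq.subgroup H, hlip⟩⟩

end Upgrade

/-- Restriction to a finite index subgroup.
If `(G,Y,X)` is a hyperbolic projection and `H ≤ G` has finite index, then the restricted
actions make `(H,Y,X)` a hyperbolic projection, and for every sublinear `κ`, `(G,Y,X)` is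
`κ`-injective (i.e. every induced projection map of `(G,Y,X)` is `κ`-injective) if and only
if `(H,Y,X)` is `κ`-injective. -/
theorem statement5 {G Y X : Type*} [Group G] [MetricSpace Y] [MetricSpace X]
    [MulAction G Y] [MulAction G X]
    (hYX : HyperbolicProjection G Y X)
    (H : Subgroup G) (hH : H.FiniteIndex) (o : Y) :
    HyperbolicProjection H Y X ∧
    ∀ κ : ℝ → ℝ, IsSublinear κ →
      ((∀ p : Y → X, InducedProjection G p → KappaInjective o κ p) ↔
        (∀ p : Y → X, InducedProjection H p → KappaInjective o κ p)) :=
  ⟨hYX.subgroup H, fun _ _ => forall_congr' fun _ =>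
    imp_congr_left (inducedProjection_subgroup_iff hYX).symm⟩
end
end

section
/- Let (G,[μ]) be a coarse median group such that ∂_κG has μ-median representatives, fix a basepoint o and D ≥ 0, and for each ζ ∈ ∂_κG fix a D-median quasi-geodesic ray h_ζ starting at o and representing ζ. For ξ ∈ ∂_κG and r ≥ 0, set U_r(ξ) := {ζ ∈ ∂_κG : ∃ s₀,t₀ ∈ ℝ≥0 such that for all s ≥ s₀ and t ≥ t₀, d_G(o, μ(o, h_ζ(s), h_ξ(t))) ≥ r}. Then for every sequence (ξ_n) and point ξ in ∂_κG: liminf over n of sup{d_G(o, μ(o, h_{ξ_n}(s), h_ξ(t))) : s,t ∈ ℝ≥0} = ∞ (i.e. ξ_n → ξ in the coarse median topology T_med) if and only if for every r > 0 there exists N such that ξ_n ∈ U_r(ξ) for all n ≥ N. In other words, {U_r(ξ) : r > 0} is a neighborhood basis of ξ in (∂_κG, T_med). -/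
noncomputable section

open Filter Metric Set Topology

/-!
Both directions rest on one coarse monotonicity estimate: if `h_ζ` and `h_ξ` are `D`-median
rays from `o`, then `d(o, μ(o, h_ζ(s₀), h_ξ(t₀)))` is bounded by an affine function of
`d(o, μ(o, h_ζ(s), h_ξ(t)))` whenever `s₀ ≤ s` and `t₀ ≤ t`. The median-ray property puts
`h(s₀)` coarsely between `o = h(0)` and `h(s)`, and the five-point condition then lets one
replace `h(s₀)` by `h(s)` inside `μ(o, ·, c)` at a bounded multiplicative and additive cost.
So once the distance exceeds a threshold depending on `r` at some `(s₀, t₀)`, it stays at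
least `r` for all larger parameters, which turns the liminf of suprema into the
eventual-membership condition.
-/

namespace IsCoarseMedianWith

variable {Y : Type*} [MetricSpace Y] {C : ℝ} {μ : Y → Y → Y → Y}

theorem nonneg (hμ : IsCoarseMedianWith C μ) (a : Y) : 0 ≤ C := by
  simpa using hμ.2.2 a a a a

theorem median_self_left (hμ : IsCoarseMedianWith C μ) (a b : Y) : μ a a b = a :=
  (hμ.1 a b b).1

theorem median_swap12 (hμ : IsCoarseMedianWith C μ) (a b c : Y) : μ a b c = μ b a c :=
  (hμ.1 a b c).2.1

theorem median_rotate (hμ : IsCoarseMedianWith C μ) (a b c : Y) : μ a b c = μ b c a :=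
  (hμ.1 a b c).2.2

theorem median_swap23 (hμ : IsCoarseMedianWith C μ) (a b c : Y) : μ a b c = μ a c b := by
  rw [hμ.median_rotate a b c, hμ.median_rotate a c b, hμ.median_swap12 c b a]

theorem dist_median_le (hμ : IsCoarseMedianWith C μ) (o x y : Y) :
    dist o (μ o x y) ≤ C * dist o y + C := by
  have h := hμ.2.2 y o x o
  rw [hμ.median_self_left, dist_comm, dist_comm y] at h
  rwa [hμ.median_rotate o x y, hμ.median_rotate x y o]

/-- The hypothesis says that `p` lies coarsely between `o` and `q`. -/
theorem dist_median_le_of_dist_le {D : ℝ} (hμ : IsCoarseMedianWith C μ) {o p q : Y}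
    (hpq : dist p (μ o p q) ≤ D) (c : Y) :
    dist o (μ o p c) ≤ C * dist o (μ o q c) + (C * D + 3 * C) := by
  have hC := hμ.nonneg o
  have h_move : dist (μ o p c) (μ o (μ o p q) c) ≤ C * D + C := by
    have h := hμ.2.2 p o c (μ o p q)
    rw [← hμ.median_swap12 o p c, ← hμ.median_swap12 o (μ o p q) c] at h
    nlinarith
  have h_five : dist (μ o (μ o p q) c) (μ o p (μ o q c)) ≤ C := by
    have h := hμ.2.1 p q c o
    rwa [hμ.median_swap12 p o q, hμ.median_swap12 q o c, hμ.median_swap12 (μ o p q) o c,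
      hμ.median_swap12 p o (μ o q c)] at h
  have h_end := hμ.dist_median_le o p (μ o q c)
  have h_tri := dist_triangle4 o (μ o p (μ o q c)) (μ o (μ o p q) c) (μ o p c)
  rw [dist_comm (μ o (μ o p q) c) (μ o p c), dist_comm (μ o p (μ o q c))] at h_tri
  linarith

end IsCoarseMedianWith

theorem realMedian_zero_of_le {a b : ℝ} (ha : 0 ≤ a) (hab : a ≤ b) : realMedian 0 a b = a := by
  simp [realMedian, ha, hab]

theorem IsMedianRayWith.dist_median_zero_le {Y : Type*} [MetricSpace Y] {D : ℝ}
    {μ : Y → Y → Y → Y} {γ : ℝ → Y} (hγ : IsMedianRayWith D μ γ) {a b : ℝ} (ha : 0 ≤ a)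
    (hab : a ≤ b) : dist (γ a) (μ (γ 0) (γ a) (γ b)) ≤ D := by
  simpa [realMedian_zero_of_le ha hab] using
    hγ 0 self_mem_Ici a (mem_Ici.2 ha) b (mem_Ici.2 (ha.trans hab))

theorem IsMedianRayWith.nonneg {Y : Type*} [MetricSpace Y] {D : ℝ} {μ : Y → Y → Y → Y}
    {γ : ℝ → Y} (hγ : IsMedianRayWith D μ γ) : 0 ≤ D :=
  dist_nonneg.trans (hγ 0 self_mem_Ici 0 self_mem_Ici 0 self_mem_Ici)

/-- `C * D + 3 * C` is the cost of one application of `dist_median_le_of_dist_le`; it is paid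
once along each of the two rays. -/
def medianRayBound (C D r : ℝ) : ℝ :=
  C * (C * r + (C * D + 3 * C)) + (C * D + 3 * C)

theorem medianRayBound_nonneg {C D r : ℝ} (hC : 0 ≤ C) (hD : 0 ≤ D) (hr : 0 ≤ r) :
    0 ≤ medianRayBound C D r := by
  unfold medianRayBound
  positivity

theorem medianRayBound_mono {C D r r' : ℝ} (hC : 0 ≤ C) (hr : r ≤ r') :
    medianRayBound C D r ≤ medianRayBound C D r' := by
  unfold medianRayBound
  gcongr

section MedianRays

variable {Y : Type*} [MetricSpace Y] {C D : ℝ} {μ : Y → Y → Y → Y} {o : Y} {γ η : ℝ → Y}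

theorem IsCoarseMedianWith.dist_median_rays_le (hμ : IsCoarseMedianWith C μ)
    (hγ : IsMedianRayWith D μ γ) (hη : IsMedianRayWith D μ η) (hγo : γ 0 = o) (hηo : η 0 = o)
    {s₀ t₀ s t : ℝ} (hs₀ : 0 ≤ s₀) (ht₀ : 0 ≤ t₀) (hs : s₀ ≤ s) (ht : t₀ ≤ t) :
    dist o (μ o (γ s₀) (η t₀)) ≤ medianRayBound C D (dist o (μ o (γ s) (η t))) := by
  have hγs := hμ.dist_median_le_of_dist_le (hγo ▸ hγ.dist_median_zero_le hs₀ hs) (η t₀)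
  have hηt := hμ.dist_median_le_of_dist_le (hηo ▸ hη.dist_median_zero_le ht₀ ht) (γ s)
  rw [hμ.median_swap23 o (η t₀), hμ.median_swap23 o (η t)] at hηt
  unfold medianRayBound
  nlinarith [hμ.nonneg o]

theorem IsCoarseMedianWith.le_dist_median_rays_of_bound_lt (hμ : IsCoarseMedianWith C μ)
    (hγ : IsMedianRayWith D μ γ) (hη : IsMedianRayWith D μ η) (hγo : γ 0 = o) (hηo : η 0 = o)
    {r s₀ t₀ : ℝ} (hs₀ : 0 ≤ s₀) (ht₀ : 0 ≤ t₀)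
    (hbound : medianRayBound C D r < dist o (μ o (γ s₀) (η t₀))) {s t : ℝ} (hs : s₀ ≤ s)
    (ht : t₀ ≤ t) : r ≤ dist o (μ o (γ s) (η t)) := by
  by_contra! hlt
  have := hμ.dist_median_rays_le hγ hη hγo hηo hs₀ ht₀ hs ht
  linarith [medianRayBound_mono (D := D) (hμ.nonneg o) hlt.le]

end MedianRays

theorem ENNReal.liminf_eq_top_iff_forall_ofReal_lt {α : Type*} {f : Filter α} {u : α → ENNReal} :
    liminf u f = ⊤ ↔ ∀ r : ℝ, 0 ≤ r → ∀ᶠ a in f, ENNReal.ofReal r < u a := by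
  rw [← top_le_iff, le_liminf_iff]
  refine ⟨fun H r _ => H _ ENNReal.ofReal_lt_top, fun H y hy => ?_⟩
  lift y to NNReal using hy.ne
  simpa using H y y.2

theorem ENNReal.ofReal_lt_biSup_biSup_edist_iff {X : Type*} [PseudoMetricSpace X] {x : X}
    {S T : Set ℝ} {F : ℝ → ℝ → X} {r : ℝ} (hr : 0 ≤ r) :
    ENNReal.ofReal r < ⨆ s ∈ S, ⨆ t ∈ T, edist x (F s t) ↔
      ∃ s ∈ S, ∃ t ∈ T, r < dist x (F s t) := by
  simp only [lt_biSup_iff, edist_dist, ENNReal.ofReal_lt_ofReal_iff_of_nonneg hr]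

theorem statement7_general {G : Type*} [MetricSpace G]
    (μ : G → G → G → G) (hμ : IsCoarseMedian μ)
    (κ : ℝ → ℝ) (o : G) (D : ℝ)
    (h : KappaBoundary G o κ → KappaMorseRay G o κ)
    (hstart : ∀ ζ, (h ζ).1 0 = o)
    (hmed : ∀ ζ, IsMedianRayWith D μ (h ζ).1) :
    ∀ (ξseq : ℕ → KappaBoundary G o κ) (ξ : KappaBoundary G o κ),
      (Filter.liminf (fun n =>
          ⨆ s ∈ Ici (0 : ℝ), ⨆ t ∈ Ici (0 : ℝ),
            edist o (μ o ((h (ξseq n)).1 s) ((h ξ).1 t))) Filter.atTop = (⊤ : ENNReal)) ↔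
      (∀ r : ℝ, 0 < r → ∃ N : ℕ, ∀ n ≥ N,
        ξseq n ∈ { ζ : KappaBoundary G o κ | ∃ s₀ t₀ : ℝ, 0 ≤ s₀ ∧ 0 ≤ t₀ ∧
          ∀ s ≥ s₀, ∀ t ≥ t₀, r ≤ dist o (μ o ((h ζ).1 s) ((h ξ).1 t)) }) := by
  obtain ⟨C, hC, hμC⟩ := hμ
  intro ξseq ξ
  rw [ENNReal.liminf_eq_top_iff_forall_ofReal_lt]
  constructor
  · intro H r hr
    have hR := medianRayBound_nonneg hC (hmed ξ).nonneg hr.le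
    obtain ⟨N, hN⟩ := eventually_atTop.1 (H _ hR)
    refine ⟨N, fun n hn => ?_⟩
    obtain ⟨s₀, hs₀, t₀, ht₀, hbound⟩ := (ENNReal.ofReal_lt_biSup_biSup_edist_iff hR).1 (hN n hn)
    exact ⟨s₀, t₀, hs₀, ht₀, fun s hs t ht => hμC.le_dist_median_rays_of_bound_lt (hmed _)
      (hmed ξ) (hstart _) (hstart ξ) hs₀ ht₀ hbound hs ht⟩
  · intro H R hR
    obtain ⟨N, hN⟩ := H (R + 1) (by positivity)
    filter_upwards [eventually_ge_atTop N] with n hn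
    obtain ⟨s₀, t₀, hs₀, ht₀, hr⟩ := hN n hn
    rw [ENNReal.ofReal_lt_biSup_biSup_edist_iff hR]
    exact ⟨s₀, hs₀, t₀, ht₀, by linarith [hr s₀ le_rfl t₀ le_rfl]⟩

/-- Lemma: `{U_r(ξ) | r > 0}` is a neighborhood basis of `ξ` in the
coarse median topology `T_med`. `G` is a finitely generated group carrying a word
metric (left multiplication acts by isometries), with a `G`-invariant coarse median `μ`,
`κ` is sublinear, and for each `ζ ∈ ∂_κ G` we fix a `D`-median quasi-geodesic ray `h ζ`
starting at `o` and representing `ζ`. Then for a sequence `ξ_n` and a point `ξ`,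
`liminf_n sup { d(o, μ(o, h_{ξ_n}(s), h_ξ(t))) | s,t ≥ 0 } = ∞` (i.e. `ξ_n → ξ` in
`T_med`) if and only if for every `r > 0` the `ξ_n` eventually lie in `U_r(ξ)`. -/
theorem statement7 {G : Type*} [Group G] [MetricSpace G]
    (hfg : Group.FG G)
    (hword : ∀ g : G, Isometry (fun x : G => g * x))
    (μ : G → G → G → G) (hμ : IsCoarseMedian μ)
    (hμinv : ∃ C : ℝ, 0 ≤ C ∧ ∀ g a b c : G,
      dist (g * μ a b c) (μ (g * a) (g * b) (g * c)) ≤ C)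
    (κ : ℝ → ℝ) (hκ : IsSublinear κ) (o : G) (D : ℝ) (hD : 0 ≤ D)
    (h : KappaBoundary G o κ → KappaMorseRay G o κ)
    (hrep : ∀ ζ, kappaPt (h ζ) = ζ)
    (hstart : ∀ ζ, (h ζ).1 0 = o)
    (hmed : ∀ ζ, IsMedianRayWith D μ (h ζ).1) :
    ∀ (ξseq : ℕ → KappaBoundary G o κ) (ξ : KappaBoundary G o κ),
      (Filter.liminf (fun n =>
          ⨆ s ∈ Ici (0 : ℝ), ⨆ t ∈ Ici (0 : ℝ),
            edist o (μ o ((h (ξseq n)).1 s) ((h ξ).1 t))) Filter.atTop = (⊤ : ENNReal)) ↔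
      (∀ r : ℝ, 0 < r → ∃ N : ℕ, ∀ n ≥ N,
        ξseq n ∈ { ζ : KappaBoundary G o κ | ∃ s₀ t₀ : ℝ, 0 ≤ s₀ ∧ 0 ≤ t₀ ∧
          ∀ s ≥ s₀, ∀ t ≥ t₀, r ≤ dist o (μ o ((h ζ).1 s) ((h ξ).1 t)) }) :=
  statement7_general μ hμ κ o D h hstart hmed
end
end
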